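/- Let δ be the derivation of C<X,Y> with δ(X) = [c_{n,m}, X], δ(Y) = 0, where c_{n,m} is the sum of words with n X's and m Y's (n ≥ 0, m ≥ 1). Then for every t ∈ C, setting D_t := ∑_{k=0}^{n} c_{n-k, m+k} t^k, one has δ(X + tY) = [D_t, X + tY]. -/
import Mathlib
set_option maxRecDepth 8000

/-- The word `f : Fin k → Fin 2` as a (noncommutative) monomial in the free algebra
`ℂ⟨X,Y⟩`, where `0 ↦ X`, `1 ↦ Y`. -/
noncomputable def word {k : ℕ} (f : Fin k → Fin 2) : FreeAlgebra ℂ (Fin 2) :=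
  (List.ofFn fun i => FreeAlgebra.ι ℂ (f i)).prod

/-- `c n m` : the sum of all words with exactly `n` letters `X` and `m` letters `Y`. -/
noncomputable def c (n m : ℕ) : FreeAlgebra ℂ (Fin 2) :=
  ∑ f ∈ Finset.univ.filter
      (fun f : Fin (n + m) → Fin 2 => (List.ofFn f).count 0 = n), word f

noncomputable def cc (N p : ℕ) : FreeAlgebra ℂ (Fin 2) :=
  ∑ f ∈ Finset.univ.filter
      (fun f : Fin N → Fin 2 => (List.ofFn f).count 0 = p), word f

lemma c_eq_cc (a b : ℕ) : c a b = cc (a + b) a := rfl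

lemma word_snoc {N : ℕ} (g : Fin N → Fin 2) (x : Fin 2) :
    word (Fin.snoc g x) = word g * FreeAlgebra.ι ℂ x := by
  show (List.ofFn fun i => FreeAlgebra.ι ℂ (Fin.snoc g x i)).prod = _
  rw [List.ofFn_succ']
  simp only [Fin.snoc_castSucc, Fin.snoc_last, List.concat_eq_append, List.prod_append,
    List.prod_cons, List.prod_nil, mul_one]
  rfl

lemma word_cons {N : ℕ} (g : Fin N → Fin 2) (x : Fin 2) :
    word (Fin.cons x g) = FreeAlgebra.ι ℂ x * word g := by
  show (List.ofFn fun i => FreeAlgebra.ι ℂ (Fin.cons x g i)).prod = _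
  rw [List.ofFn_succ]
  simp only [Fin.cons_zero, Fin.cons_succ, List.prod_cons]
  rfl

lemma count_snoc {N : ℕ} (g : Fin N → Fin 2) (x : Fin 2) :
    (List.ofFn (Fin.snoc g x)).count (0 : Fin 2) =
      (List.ofFn g).count 0 + if x = 0 then 1 else 0 := by
  rw [List.ofFn_succ', List.concat_eq_append, List.count_append]
  simp only [Fin.snoc_castSucc, Fin.snoc_last, List.count_singleton]
  congr 1
  by_cases h : x = 0 <;> simp [h]

lemma count_cons {N : ℕ} (g : Fin N → Fin 2) (x : Fin 2) :
    (List.ofFn (Fin.cons x g)).count (0 : Fin 2) =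
      (List.ofFn g).count 0 + if x = 0 then 1 else 0 := by
  rw [List.ofFn_succ, List.count_cons]
  simp only [Fin.cons_zero, Fin.cons_succ]
  congr 1
  by_cases h : x = 0 <;> simp [h]

lemma cc_split_right (N p : ℕ) :
    cc (N + 1) (p + 1) = cc N p * FreeAlgebra.ι ℂ 0 + cc N (p + 1) * FreeAlgebra.ι ℂ 1 := by
  rw [cc, Finset.sum_filter,
    ← Fintype.sum_equiv (Fin.snocEquiv (fun _ : Fin (N + 1) => Fin 2))
      (fun q : (Fin 2) × (Fin N → Fin 2) =>
        if (List.ofFn (Fin.snoc q.2 q.1)).count (0 : Fin 2) = p + 1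
        then word (Fin.snoc q.2 q.1) else 0)
      _ (fun q => by simp [Fin.snocEquiv]),
    Fintype.sum_prod_type, Fin.sum_univ_two]
  congr 1
  · rw [cc, Finset.sum_filter, Finset.sum_mul]
    refine Finset.sum_congr rfl fun g _ => ?_
    rw [count_snoc, word_snoc]
    simp [ite_mul]
  · rw [cc, Finset.sum_filter, Finset.sum_mul]
    refine Finset.sum_congr rfl fun g _ => ?_
    rw [count_snoc, word_snoc]
    simp [ite_mul]

lemma cc_split_left (N p : ℕ) :
    cc (N + 1) (p + 1) = FreeAlgebra.ι ℂ 0 * cc N p + FreeAlgebra.ι ℂ 1 * cc N (p + 1) := by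
  rw [cc, Finset.sum_filter,
    ← Fintype.sum_equiv (Fin.consEquiv (fun _ : Fin (N + 1) => Fin 2))
      (fun q : (Fin 2) × (Fin N → Fin 2) =>
        if (List.ofFn (Fin.cons q.1 q.2)).count (0 : Fin 2) = p + 1
        then word (Fin.cons q.1 q.2) else 0)
      _ (fun q => by simp [Fin.consEquiv]),
    Fintype.sum_prod_type, Fin.sum_univ_two]
  congr 1
  · rw [cc, Finset.sum_filter, Finset.mul_sum]
    refine Finset.sum_congr rfl fun g _ => ?_
    rw [count_cons, word_cons]
    simp [mul_ite]
  · rw [cc, Finset.sum_filter, Finset.mul_sum]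
    refine Finset.sum_congr rfl fun g _ => ?_
    rw [count_cons, word_cons]
    simp [mul_ite]

lemma cc_zero_right (N : ℕ) :
    cc (N + 1) 0 = cc N 0 * FreeAlgebra.ι ℂ 1 := by
  rw [cc, Finset.sum_filter,
    ← Fintype.sum_equiv (Fin.snocEquiv (fun _ : Fin (N + 1) => Fin 2))
      (fun q : (Fin 2) × (Fin N → Fin 2) =>
        if (List.ofFn (Fin.snoc q.2 q.1)).count (0 : Fin 2) = 0
        then word (Fin.snoc q.2 q.1) else 0)
      _ (fun q => by simp [Fin.snocEquiv]),
    Fintype.sum_prod_type, Fin.sum_univ_two]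
  have h0 : ∀ g : Fin N → Fin 2,
      (if (List.ofFn (Fin.snoc g 0)).count (0 : Fin 2) = 0 then word (Fin.snoc g 0) else 0) = 0 := by
    intro g; rw [count_snoc]; simp
  simp only [h0, Finset.sum_const_zero, zero_add]
  rw [cc, Finset.sum_filter, Finset.sum_mul]
  refine Finset.sum_congr rfl fun g _ => ?_
  rw [count_snoc, word_snoc]
  simp [ite_mul]

lemma cc_zero_left (N : ℕ) :
    cc (N + 1) 0 = FreeAlgebra.ι ℂ 1 * cc N 0 := by
  rw [cc, Finset.sum_filter,
    ← Fintype.sum_equiv (Fin.consEquiv (fun _ : Fin (N + 1) => Fin 2))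
      (fun q : (Fin 2) × (Fin N → Fin 2) =>
        if (List.ofFn (Fin.cons q.1 q.2)).count (0 : Fin 2) = 0
        then word (Fin.cons q.1 q.2) else 0)
      _ (fun q => by simp [Fin.consEquiv]),
    Fintype.sum_prod_type, Fin.sum_univ_two]
  have h0 : ∀ g : Fin N → Fin 2,
      (if (List.ofFn (Fin.cons (0 : Fin 2) g)).count (0 : Fin 2) = 0 then word (Fin.cons 0 g) else 0) = 0 := by
    intro g; rw [count_cons]; simp
  simp only [h0, Finset.sum_const_zero, zero_add]
  rw [cc, Finset.sum_filter, Finset.mul_sum]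
  refine Finset.sum_congr rfl fun g _ => ?_
  rw [count_cons, word_cons]
  simp [mul_ite]

lemma ccY_comm (N : ℕ) : cc N 0 * FreeAlgebra.ι ℂ 1 = FreeAlgebra.ι ℂ 1 * cc N 0 := by
  have := cc_zero_right N
  rw [← this, cc_zero_left]

lemma expand_aux (A B C : FreeAlgebra ℂ (Fin 2)) (t : ℂ) (k : ℕ) :
    (t ^ k • A) * (B + t • C) - (B + t • C) * (t ^ k • A) =
      t ^ k • (A * B - B * A) + t ^ (k + 1) • (A * C - C * A) := by
  simp only [mul_add, add_mul, smul_mul_assoc, mul_smul_comm, smul_sub, smul_add, smul_smul,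
    pow_succ, mul_comm t]
  abel

/-- For the derivation `δ_{n,m}` with `δ(X) = [c_{n,m}, X]`, `δ(Y) = 0` (`m ≥ 1`),
and `D_t := ∑_{k=0}^{n} c_{n-k,m+k} tᵏ`, one has
`δ(X + tY) = [D_t, X + tY]`, i.e. `[c_{n,m}, X] = [D_t, X + tY]` for every `t ∈ ℂ`. -/
theorem delta_commutator_identity (n m : ℕ) (hm : 1 ≤ m) (t : ℂ) :
    c n m * FreeAlgebra.ι ℂ 0 - FreeAlgebra.ι ℂ 0 * c n m =
      (∑ k ∈ Finset.range (n + 1), t ^ k • c (n - k) (m + k)) *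
          (FreeAlgebra.ι ℂ 0 + t • FreeAlgebra.ι ℂ 1) -
        (FreeAlgebra.ι ℂ 0 + t • FreeAlgebra.ι ℂ 1) *
          (∑ k ∈ Finset.range (n + 1), t ^ k • c (n - k) (m + k)) := by
  set X := FreeAlgebra.ι ℂ (0 : Fin 2) with hX
  set Y := FreeAlgebra.ι ℂ (1 : Fin 2) with hY
  have hc : ∀ k ∈ Finset.range (n + 1), t ^ k • c (n - k) (m + k) = t ^ k • cc (n + m) (n - k) := by
    intro k hk
    rw [Finset.mem_range] at hk
    have h : (n - k) + (m + k) = n + m := by omega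
    rw [c_eq_cc, h]
  rw [Finset.sum_congr rfl hc, c_eq_cc]
  set u : ℕ → FreeAlgebra ℂ (Fin 2) := fun k => cc (n + m) (n - k) * X - X * cc (n + m) (n - k) with hu
  set v : ℕ → FreeAlgebra ℂ (Fin 2) := fun k => cc (n + m) (n - k) * Y - Y * cc (n + m) (n - k) with hv
  have expand :
      (∑ k ∈ Finset.range (n + 1), t ^ k • cc (n + m) (n - k)) * (X + t • Y) -
        (X + t • Y) * (∑ k ∈ Finset.range (n + 1), t ^ k • cc (n + m) (n - k)) =
      (∑ k ∈ Finset.range (n + 1), t ^ k • u k) +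
        (∑ k ∈ Finset.range (n + 1), t ^ (k + 1) • v k) := by
    rw [Finset.sum_mul, Finset.mul_sum, ← Finset.sum_sub_distrib, ← Finset.sum_add_distrib]
    refine Finset.sum_congr rfl fun k _ => ?_
    simp only [hu, hv]
    exact expand_aux _ _ _ t k
  rw [expand]
  have hkey : ∀ k < n, t ^ (k + 1) • v k = -(t ^ (k + 1) • u (k + 1)) := by
    intro k hk
    have huv : u (k + 1) + v k = 0 := by
      obtain ⟨a, ha⟩ : ∃ a, n - k = a + 1 := ⟨n - k - 1, by omega⟩
      have ha' : n - (k + 1) = a := by omega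
      simp only [hu, hv, ha, ha']
      have h1 : cc (n + m) a * X + cc (n + m) (a + 1) * Y = cc (n + m + 1) (a + 1) :=
        (cc_split_right (n + m) a).symm
      have h2 : X * cc (n + m) a + Y * cc (n + m) (a + 1) = cc (n + m + 1) (a + 1) :=
        (cc_split_left (n + m) a).symm
      rw [sub_add_sub_comm, h1, h2, sub_self]
    rw [← smul_neg]
    congr 1
    linear_combination (norm := abel) huv
  have hvn : v n = 0 := by
    simp only [hv, Nat.sub_self]
    rw [ccY_comm, sub_self]
  rw [Finset.sum_range_succ (fun k => t ^ (k + 1) • v k), hvn, smul_zero, add_zero,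
    Finset.sum_congr rfl (fun k hk => hkey k (Finset.mem_range.mp hk)),
    Finset.sum_neg_distrib, Finset.sum_range_succ' (fun k => t ^ k • u k)]
  simp [hu]
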